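/- In the exterior algebra over ℂ generated by dz1,...,dz4,dz̄1,...,dz̄4, let x1,...,x4 be distinct reals, h3 = x1x3 + x2x4, h4 = x1x4 + x2x3, h2 = x1x2 + x3x4, and define the 2-form A1 as the Galois-covariant sum A1 = h3(x1-x3) dz1∧dz3 + h3(x2-x4) dz̄2∧dz̄4 + h3(x2-x4) dz2∧dz4 + h3(x1-x3) dz̄1∧dz̄3 + h4(x1-x4) dz1∧dz̄4 + h4(x2-x3) dz̄2∧dz3 + h4(x2-x3) dz2∧dz̄3 + h4(x1-x4) dz̄1∧dz4 + h2(x1-x2) dz1∧dz̄2 + h2(x3-x4) dz̄3∧dz4 + h2(x3-x4) dz3∧dz̄4 + h2(x1-x2) dz̄1∧dz2. Then A1 ∧ ω^3 = 0, where ω = (iD/Δ)(μ1 dz1∧dz̄1 - μ2 dz2∧dz̄2 + μ3 dz3∧dz̄3 - μ4 dz4∧dz̄4) with D, Δ, μ_j as above. -/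

import Mathlib

open Complex

/-- Anticommuting generators: `e 0,...,e 3` are `dz1,...,dz4` and
`e 4,...,e 7` are `dz̄1,...,dz̄4`. -/
noncomputable def e (i : Fin 8) : ExteriorAlgebra ℂ (Fin 8 → ℂ) :=
  ExteriorAlgebra.ι ℂ (Pi.single i 1)

/-!
Write `ω = c • ∑ⱼ sⱼ • Pⱼ` with `Pⱼ = dzⱼ ∧ dz̄ⱼ`. The `Pⱼ` are even, hence commute with each
other and with every `dzₐ`, `dz̄ₐ`, and they square to zero, so a sum of `k` of them has
vanishing `(k+1)`-st power. Every term of `A1` is a multiple of `v = dzₐ ∧ dz_b`,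
`dzₐ ∧ dz̄_b` or `dz̄ₐ ∧ dz̄_b` with `a ≠ b`, and `v ∧ Pₐ = v ∧ P_b = 0`. Hence
`v ∧ ω³ = c³ • v ∧ (sⱼ Pⱼ + sₖ Pₖ)³` for the two remaining indices `j, k`, and this cube vanishes.
-/

section Semiring

variable {A ι : Type*} [Semiring A]

theorem Finset.sum_pow_card_add_one_eq_zero {x : ι → A} (hcomm : ∀ i j, Commute (x i) (x j))
    (hsq : ∀ i, x i ^ 2 = 0) (s : Finset ι) : (∑ i ∈ s, x i) ^ (s.card + 1) = 0 := by
  classical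
  induction s using Finset.induction_on with
  | empty => simp
  | insert a s ha ih =>
    rw [Finset.sum_insert ha, Finset.card_insert_of_notMem ha]
    exact (Commute.sum_right _ _ _ fun i _ ↦ hcomm a i)
      |>.add_pow_eq_zero_of_add_le_succ_of_pow_eq_zero (hsq a) ih (by omega)

theorem mul_add_pow_eq_mul_pow {v p q : A} (hv : v * p = 0) (hpq : Commute p q) (n : ℕ) :
    v * (p + q) ^ n = v * q ^ n := by
  induction n with
  | zero => simp
  | succ n ih =>
    rw [pow_succ, ← mul_assoc, ih, mul_add, mul_assoc, ← (hpq.pow_right n).eq, ← mul_assoc, hv,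
      zero_mul, zero_add, mul_assoc, ← pow_succ]

theorem mul_sum_pow_eq_zero [Fintype ι] [DecidableEq ι] {x : ι → A}
    (hcomm : ∀ i j, Commute (x i) (x j)) (hsq : ∀ i, x i ^ 2 = 0) {v : A} {s : Finset ι}
    (hv : ∀ i ∈ s, v * x i = 0) {n : ℕ} (hn : sᶜ.card < n) : v * (∑ i, x i) ^ n = 0 := by
  have hvs : v * ∑ i ∈ s, x i = 0 := by rw [Finset.mul_sum]; exact Finset.sum_eq_zero hv
  have hs : Commute (∑ i ∈ s, x i) (∑ i ∈ sᶜ, x i) :=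
    Commute.sum_left _ _ _ fun i _ ↦ Commute.sum_right _ _ _ fun j _ ↦ hcomm i j
  rw [← Finset.sum_add_sum_compl s x, mul_add_pow_eq_mul_pow hvs hs,
    pow_eq_zero_of_le hn (Finset.sum_pow_card_add_one_eq_zero hcomm hsq _), mul_zero]

end Semiring

namespace ExteriorAlgebra

variable {R M : Type*} [CommRing R] [AddCommGroup M] [Module R M]

theorem ι_mul_ι_comm (u v : M) : ι R u * ι R v = -(ι R v * ι R u) :=
  eq_neg_of_add_eq_zero_left (ι_add_mul_swap u v)

theorem commute_ι_ι_mul_ι (u v w : M) : Commute (ι R u) (ι R v * ι R w) := by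
  rw [Commute, SemiconjBy, ← mul_assoc, ι_mul_ι_comm u v, neg_mul, mul_assoc,
    ι_mul_ι_comm u w, mul_neg, neg_neg, mul_assoc]

theorem commute_ι_mul_ι (a b c d : M) : Commute (ι R a * ι R b) (ι R c * ι R d) :=
  (commute_ι_ι_mul_ι a c d).mul_left (commute_ι_ι_mul_ι b c d)

theorem ι_mul_ι_mul_self_left (a b : M) : ι R a * (ι R a * ι R b) = 0 := by
  rw [← mul_assoc, ι_sq_zero, zero_mul]

theorem ι_mul_ι_mul_self_right (a b : M) : ι R b * (ι R a * ι R b) = 0 := by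
  rw [(commute_ι_ι_mul_ι b a b).eq, mul_assoc, ι_sq_zero, mul_zero]

theorem ι_mul_ι_sq (a b : M) : (ι R a * ι R b) ^ 2 = 0 := by
  rw [sq, mul_assoc, ι_mul_ι_mul_self_right, mul_zero]

theorem ι_mul_ι_mul_ι_mul_ι_eq_zero {y z a b : M} (h : y = a ∨ y = b ∨ z = a ∨ z = b) :
    ι R y * ι R z * (ι R a * ι R b) = 0 := by
  rcases h with rfl | rfl | rfl | rfl
  · rw [mul_assoc, (commute_ι_ι_mul_ι z y b).eq, ← mul_assoc, ι_mul_ι_mul_self_left, zero_mul]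
  · rw [mul_assoc, (commute_ι_ι_mul_ι z a y).eq, ← mul_assoc, ι_mul_ι_mul_self_right, zero_mul]
  · rw [mul_assoc, ι_mul_ι_mul_self_left, mul_zero]
  · rw [mul_assoc, ι_mul_ι_mul_self_right, mul_zero]

end ExteriorAlgebra

noncomputable def dzWedgeDzbar (j : Fin 4) : ExteriorAlgebra ℂ (Fin 8 → ℂ) :=
  e ⟨j, by omega⟩ * e ⟨j + 4, by omega⟩

theorem e_mul_e_mul_dzWedgeDzbar_eq_zero {a b : Fin 8} {j : Fin 4}
    (h : a.val % 4 = j ∨ b.val % 4 = j) : e a * e b * dzWedgeDzbar j = 0 := by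
  have hab : a = ⟨j, by omega⟩ ∨ a = ⟨j + 4, by omega⟩ ∨
      b = ⟨j, by omega⟩ ∨ b = ⟨j + 4, by omega⟩ := by
    simp only [Fin.ext_iff]
    omega
  apply ExteriorAlgebra.ι_mul_ι_mul_ι_mul_ι_eq_zero
  rcases hab with rfl | rfl | rfl | rfl <;> simp

theorem e_mul_e_mul_sum_pow_eq_zero (s : Fin 4 → ℂ) {a b : Fin 8} (hab : a.val % 4 ≠ b.val % 4)
    {n : ℕ} (hn : 2 < n) : e a * e b * (∑ j, s j • dzWedgeDzbar j) ^ n = 0 := by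
  let pair (c : Fin 8) : Fin 4 := ⟨c % 4, by omega⟩
  have hpair : pair a ≠ pair b := fun h ↦ hab (Fin.ext_iff.mp h)
  refine mul_sum_pow_eq_zero (s := {pair a, pair b}) (fun i j ↦ ?_) (fun i ↦ ?_) (fun i hi ↦ ?_) ?_
  · exact ((ExteriorAlgebra.commute_ι_mul_ι _ _ _ _).smul_left _).smul_right _
  · rw [smul_pow, dzWedgeDzbar, e, e, ExteriorAlgebra.ι_mul_ι_sq, smul_zero]
  · rw [mul_smul_comm, e_mul_e_mul_dzWedgeDzbar_eq_zero, smul_zero]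
    simp only [Finset.mem_insert, Finset.mem_singleton, Fin.ext_iff, pair] at hi
    omega
  · rw [Finset.card_compl, Finset.card_pair hpair, Fintype.card_fin]
    omega

theorem stmt_15_general (x1 x2 x3 x4 : ℝ)
    (D Δ μ1 μ2 μ3 μ4 h2 h3 h4 : ℝ)
    (ω A1 : ExteriorAlgebra ℂ (Fin 8 → ℂ))
    (hω : ω = (I * D / Δ) • ((μ1 : ℂ) • (e 0 * e 4) - (μ2 : ℂ) • (e 1 * e 5)
        + (μ3 : ℂ) • (e 2 * e 6) - (μ4 : ℂ) • (e 3 * e 7)))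
    (hA1 : A1 =
        ((h3*(x1-x3) : ℝ) : ℂ) • (e 0 * e 2) + ((h3*(x2-x4) : ℝ) : ℂ) • (e 5 * e 7)
      + ((h3*(x2-x4) : ℝ) : ℂ) • (e 1 * e 3) + ((h3*(x1-x3) : ℝ) : ℂ) • (e 4 * e 6)
      + ((h4*(x1-x4) : ℝ) : ℂ) • (e 0 * e 7) + ((h4*(x2-x3) : ℝ) : ℂ) • (e 5 * e 2)
      + ((h4*(x2-x3) : ℝ) : ℂ) • (e 1 * e 6) + ((h4*(x1-x4) : ℝ) : ℂ) • (e 4 * e 3)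
      + ((h2*(x1-x2) : ℝ) : ℂ) • (e 0 * e 5) + ((h2*(x3-x4) : ℝ) : ℂ) • (e 6 * e 3)
      + ((h2*(x3-x4) : ℝ) : ℂ) • (e 2 * e 7) + ((h2*(x1-x2) : ℝ) : ℂ) • (e 4 * e 1)) :
    A1 * ω^3 = 0 := by
  have hω' : ω = (I * D / Δ) • ∑ j, ![(μ1 : ℂ), -μ2, μ3, -μ4] j • dzWedgeDzbar j := by
    simp [hω, Fin.sum_univ_four, dzWedgeDzbar, sub_eq_add_neg]
  rw [hA1, hω', smul_pow]
  simp (disch := decide) only [add_mul, smul_mul_assoc, mul_smul_comm,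
    e_mul_e_mul_sum_pow_eq_zero, smul_zero, add_zero]

theorem stmt_15 (x1 x2 x3 x4 : ℝ)
    (hne : x1 ≠ x2 ∧ x1 ≠ x3 ∧ x1 ≠ x4 ∧ x2 ≠ x3 ∧ x2 ≠ x4 ∧ x3 ≠ x4)
    (D Δ μ1 μ2 μ3 μ4 h2 h3 h4 : ℝ)
    (hD : D = (x1-x2)*(x1-x3)*(x1-x4)*(x2-x3)*(x2-x4)*(x3-x4))
    (hΔ : Δ = D^2)
    (hμ1 : μ1 = (x1-x2)*(x1-x3)*(x1-x4))
    (hμ2 : μ2 = (x2-x1)*(x2-x3)*(x2-x4))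
    (hμ3 : μ3 = (x3-x1)*(x3-x2)*(x3-x4))
    (hμ4 : μ4 = (x4-x1)*(x4-x2)*(x4-x3))
    (hh2 : h2 = x1*x2 + x3*x4) (hh3 : h3 = x1*x3 + x2*x4) (hh4 : h4 = x1*x4 + x2*x3)
    (ω A1 : ExteriorAlgebra ℂ (Fin 8 → ℂ))
    (hω : ω = (I * D / Δ) • ((μ1 : ℂ) • (e 0 * e 4) - (μ2 : ℂ) • (e 1 * e 5)
        + (μ3 : ℂ) • (e 2 * e 6) - (μ4 : ℂ) • (e 3 * e 7)))
    (hA1 : A1 =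
        ((h3*(x1-x3) : ℝ) : ℂ) • (e 0 * e 2) + ((h3*(x2-x4) : ℝ) : ℂ) • (e 5 * e 7)
      + ((h3*(x2-x4) : ℝ) : ℂ) • (e 1 * e 3) + ((h3*(x1-x3) : ℝ) : ℂ) • (e 4 * e 6)
      + ((h4*(x1-x4) : ℝ) : ℂ) • (e 0 * e 7) + ((h4*(x2-x3) : ℝ) : ℂ) • (e 5 * e 2)
      + ((h4*(x2-x3) : ℝ) : ℂ) • (e 1 * e 6) + ((h4*(x1-x4) : ℝ) : ℂ) • (e 4 * e 3)
      + ((h2*(x1-x2) : ℝ) : ℂ) • (e 0 * e 5) + ((h2*(x3-x4) : ℝ) : ℂ) • (e 6 * e 3)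
      + ((h2*(x3-x4) : ℝ) : ℂ) • (e 2 * e 7) + ((h2*(x1-x2) : ℝ) : ℂ) • (e 4 * e 1)) :
    A1 * ω^3 = 0 :=
  stmt_15_general x1 x2 x3 x4 D Δ μ1 μ2 μ3 μ4 h2 h3 h4 ω A1 hω hA1
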